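/- Let G be a graph without isolated vertices, and let M be a nontrivial, unbounded graph matroid family with dimensionality d. Let k ≥ 2 be an integer. If the matroid M(G) is vertically k-connected, then the minimum degree of G is at least k + d − 1; in particular, |V(G)| ≥ k + d. -/

import Mathlib

/-!
Common framework: graph matroid families.

A finite simple graph (without isolated vertices) is identified with its edge
set: a finite set of non-diagonal elements of `Sym2 ℕ`.  A graph matroid
family is encoded, following the paper, as a finitary matroid on the edge set
of the countable complete graph on `ℕ` that is invariant under all
permutations of `ℕ`.
-/

/-- The set of vertices covered by a set of edges. -/
def eSupp (E : Set (Sym2 ℕ)) : Set ℕ := {v : ℕ | ∃ e ∈ E, v ∈ e}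

/-- The edge set of the complete graph on the vertex set `V`. -/
def clique (V : Set ℕ) : Set (Sym2 ℕ) := {e : Sym2 ℕ | ¬ e.IsDiag ∧ ∀ v ∈ e, v ∈ V}

/-- The edge set of the complete graph `K_n` on the vertices `0, …, n-1`. -/
def cliqueN (n : ℕ) : Set (Sym2 ℕ) := clique {v : ℕ | v < n}

/-- `E` is (the edge set of) a finite simple graph. -/
def IsGraph (E : Set (Sym2 ℕ)) : Prop := E.Finite ∧ ∀ e ∈ E, ¬ e.IsDiag

/-- The degree of the vertex `v` in the edge set `E`. -/
noncomputable def deg (E : Set (Sym2 ℕ)) (v : ℕ) : ℕ := {e ∈ E | v ∈ e}.ncard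

/-- The minimum degree of (the graph with) edge set `E` (whose vertex set is `eSupp E`). -/
noncomputable def minDeg (E : Set (Sym2 ℕ)) : ℕ := sInf {k : ℕ | ∃ v ∈ eSupp E, deg E v = k}

/-- Deleting a set `S` of vertices from the graph with edge set `E`. -/
def deleteVerts (E : Set (Sym2 ℕ)) (S : Set ℕ) : Set (Sym2 ℕ) := {e ∈ E | ∀ v ∈ e, v ∉ S}

/-- The graph with edge set `E` is `k`-connected: it has more than `k` vertices and
deleting any set of fewer than `k` vertices leaves a connected graph. -/
def KConnected (k : ℕ) (E : Set (Sym2 ℕ)) : Prop :=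
  k < (eSupp E).ncard ∧
  ∀ S : Finset ℕ, S.card < k →
    ((SimpleGraph.fromEdgeSet E).induce (eSupp E \ ↑S)).Connected

/-- `E` is a forest. -/
def IsForest (E : Set (Sym2 ℕ)) : Prop := (SimpleGraph.fromEdgeSet E).IsAcyclic

/-- `E` is a matching: no two distinct edges of `E` share a vertex. -/
def IsMatching (E : Set (Sym2 ℕ)) : Prop :=
  ∀ e ∈ E, ∀ f ∈ E, e ≠ f → ∀ v : ℕ, v ∈ e → v ∉ f

/-- `E` is a star `K_{1,m}` with `m` edges. -/
def IsStar (m : ℕ) (E : Set (Sym2 ℕ)) : Prop :=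
  ∃ (c : ℕ) (L : Finset ℕ), c ∉ L ∧ L.card = m ∧ E = (fun x => s(c, x)) '' ↑L

/-- `C` is a cycle graph `C_n` for some `n ≥ 3`. -/
def IsCycleGraph (C : Set (Sym2 ℕ)) : Prop :=
  ∃ n : ℕ, 3 ≤ n ∧ ∃ f : ZMod n → ℕ, Function.Injective f ∧
    C = {e : Sym2 ℕ | ∃ i : ZMod n, e = s(f i, f (i + 1))}

/-- The rank of the set `X` in the matroid `M₀`: the supremum of the cardinalities of
independent subsets of `X` (as a natural number; all sets we use are finite). -/
noncomputable def mrk (M₀ : Matroid (Sym2 ℕ)) (X : Set (Sym2 ℕ)) : ℕ :=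
  sSup {n : ℕ | ∃ I ⊆ X, M₀.Indep I ∧ I.ncard = n}

/-- A vertical `k`-separation of the matroid `M₀`. -/
def VerticalSep (M₀ : Matroid (Sym2 ℕ)) (k : ℕ) (E₁ E₂ : Set (Sym2 ℕ)) : Prop :=
  Disjoint E₁ E₂ ∧ E₁ ∪ E₂ = M₀.E ∧
  k ≤ mrk M₀ E₁ ∧ k ≤ mrk M₀ E₂ ∧
  mrk M₀ E₁ + mrk M₀ E₂ + 1 ≤ mrk M₀ M₀.E + k

/-- The matroid `M₀` is vertically `k`-connected. -/
def VerticallyConnected (M₀ : Matroid (Sym2 ℕ)) (k : ℕ) : Prop :=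
  k ≤ mrk M₀ M₀.E ∧
  ∀ k' : ℕ, 0 < k' → k' < k → ∀ E₁ E₂ : Set (Sym2 ℕ), ¬ VerticalSep M₀ k' E₁ E₂

/-- A `d`-dimensional abstract rigidity matroid on the complete graph with vertex set `V`. -/
def IsARM (d : ℕ) (V : Set ℕ) (M₀ : Matroid (Sym2 ℕ)) : Prop :=
  M₀.E = clique V ∧
  (∀ E₁ E₂ : Set (Sym2 ℕ), E₁ ⊆ clique V → E₂ ⊆ clique V →
      (eSupp E₁ ∩ eSupp E₂).ncard < d →
      M₀.closure (E₁ ∪ E₂) = M₀.closure E₁ ∪ M₀.closure E₂) ∧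
  (∀ E₁ E₂ : Set (Sym2 ℕ), E₁ ⊆ clique V → E₂ ⊆ clique V →
      d ≤ (eSupp E₁ ∩ eSupp E₂).ncard →
      M₀.closure E₁ = clique (eSupp E₁) → M₀.closure E₂ = clique (eSupp E₂) →
      M₀.closure (E₁ ∪ E₂) = clique (eSupp E₁ ∪ eSupp E₂))

/-- The `d`-dimensional edge split operation: replace an edge `uv` of `G` by a new
vertex `w` joined to `u` and `v`, as well as to `d - 1` other vertices of `G`. -/
def EdgeSplit (d : ℕ) (G G' : Set (Sym2 ℕ)) : Prop :=
  ∃ (u v w : ℕ) (X : Finset ℕ),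
    s(u, v) ∈ G ∧ w ∉ eSupp G ∧ ↑X ⊆ eSupp G ∧ X.card = d - 1 ∧ u ∉ X ∧ v ∉ X ∧
    G' = (G \ {s(u, v)}) ∪ {s(w, u), s(w, v)} ∪ ((fun x => s(w, x)) '' ↑X)

/-- A graph matroid family: a finitary matroid on the edge set of the countable
complete graph on `ℕ`, invariant under all permutations of `ℕ`. -/
structure GraphMatroidFamily where
  /-- The underlying matroid on the edge set of `K_ℕ`. -/
  M : Matroid (Sym2 ℕ)
  ground_eq : M.E = {e : Sym2 ℕ | ¬ e.IsDiag}
  finitary : M.Finitary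
  invariant : ∀ σ : Equiv.Perm ℕ, ∀ I : Set (Sym2 ℕ),
    M.Indep I → M.Indep (Sym2.map σ '' I)

namespace GraphMatroidFamily

variable (M : GraphMatroidFamily)

/-- The rank function of the family: `M.rk E` is the rank of the matroid `M(G)` for
any graph `G` whose edge set contains `E`. -/
noncomputable def rk (E : Set (Sym2 ℕ)) : ℕ := mrk M.M E

/-- A set of edges (a graph) is `M`-independent. -/
def Indep (E : Set (Sym2 ℕ)) : Prop := M.M.Indep E

/-- `C` is an `M`-circuit: a graph that is not `M`-independent, but such that deleting
any single edge from it yields an `M`-independent graph. -/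
def IsCircuit (C : Set (Sym2 ℕ)) : Prop :=
  IsGraph C ∧ ¬ M.Indep C ∧ ∀ e ∈ C, M.Indep (C \ {e})

/-- The graph with edge set `E` is `M`-rigid. -/
def Rigid (E : Set (Sym2 ℕ)) : Prop := M.rk E = M.rk (clique (eSupp E))

/-- The graph with vertex set `V` and edge set `E` is `M`-rigid. -/
def RigidOn (V : Set ℕ) (E : Set (Sym2 ℕ)) : Prop := M.rk E = M.rk (clique V)

/-- `M` is trivial if every (finite, simple) graph is `M`-independent. -/
def Trivial : Prop := ∀ E : Set (Sym2 ℕ), IsGraph E → M.Indep E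

/-- `M` is unbounded: the sequence `r(K_n)` is unbounded. -/
def Unbounded : Prop := ∀ B : ℕ, ∃ n : ℕ, B < M.rk (cliqueN n)

/-- `M` is bounded: the sequence `r(K_n)` is bounded. -/
def Bounded : Prop := ∃ B : ℕ, ∀ n : ℕ, M.rk (cliqueN n) ≤ B

/-- For a bounded family, `m` is the rank `r(M)` of `M`: the maximum (limit) of the
monotone sequence `r(K_n)`. -/
def HasRank (m : ℕ) : Prop :=
  (∀ n : ℕ, M.rk (cliqueN n) ≤ m) ∧ ∃ n : ℕ, M.rk (cliqueN n) = m

/-- `d` is the dimensionality of (the nontrivial family) `M`: the least `d` such that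
there is an `M`-circuit with minimum degree `d + 1`. -/
def IsDimensionality (d : ℕ) : Prop :=
  IsLeast {d : ℕ | ∃ C, M.IsCircuit C ∧ minDeg C = d + 1} d

/-- `t` is the threshold of (the nontrivial family) `M` with dimensionality `d`:
the least value of `|V(C)| - 1` over all `M`-circuits `C` with minimum degree `d + 1`. -/
def IsThreshold (d t : ℕ) : Prop :=
  IsLeast {t : ℕ | ∃ C, M.IsCircuit C ∧ minDeg C = d + 1 ∧ (eSupp C).ncard = t + 1} t

/-- `M` has the Lovász–Yemini property. -/
def LovaszYemini : Prop :=
  ∃ c : ℕ, ∀ E : Set (Sym2 ℕ), IsGraph E → KConnected c E → M.Rigid E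

/-- `ψ` is an isomorphism between the matroids `M(G)` and `M(H)`. -/
def MatroidIso (G H : Set (Sym2 ℕ)) (ψ : Sym2 ℕ → Sym2 ℕ) : Prop :=
  Set.BijOn ψ G H ∧ ∀ S ⊆ G, (M.Indep S ↔ M.Indep (ψ '' S))

/-- `G` is `M`-reconstructible: every isomorphism between `M(G)` and `M(H)` (for a graph
`H` without isolated vertices) is induced by a graph isomorphism. -/
def Reconstructible (G : Set (Sym2 ℕ)) : Prop :=
  ∀ H : Set (Sym2 ℕ), IsGraph H → ∀ ψ : Sym2 ℕ → Sym2 ℕ, M.MatroidIso G H ψ →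
    ∃ φ : ℕ → ℕ, Set.BijOn φ (eSupp G) (eSupp H) ∧ ∀ e ∈ G, ψ e = Sym2.map φ e

/-- `M` has the Whitney property. -/
def Whitney : Prop :=
  ∃ c : ℕ, ∀ E : Set (Sym2 ℕ), IsGraph E → KConnected c E → M.Reconstructible E

/-- `M` is the union of the graph matroid families `Ms`. -/
def IsUnionOf {k : ℕ} (Ms : Fin k → GraphMatroidFamily) : Prop :=
  ∀ I : Set (Sym2 ℕ),
    M.Indep I ↔ ∃ Is : Fin k → Set (Sym2 ℕ), (∀ i, (Ms i).Indep (Is i)) ∧ I = ⋃ i, Is i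

/-- `M` is a family of `d`-dimensional abstract rigidity matroids. -/
def FamilyOfARM (d : ℕ) : Prop :=
  ∀ n : ℕ, d ≤ n → IsARM d {v : ℕ | v < n} (M.M.restrict (cliqueN n))

/-- `M` is `1`-extendable: its dimensionality `d` is finite and positive, and the
`d`-dimensional edge split operation preserves `M`-independence. -/
def OneExtendable : Prop :=
  ∃ d : ℕ, 0 < d ∧ M.IsDimensionality d ∧
    ∀ G G' : Set (Sym2 ℕ), IsGraph G → M.Indep G → EdgeSplit d G G' → M.Indep G'

/-- `G` is `k`-vertex-redundantly `M`-rigid. -/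
def VertexRedundantlyRigid (k : ℕ) (G : Set (Sym2 ℕ)) : Prop :=
  M.Rigid G ∧ ∀ S : Finset ℕ, ↑S ⊆ eSupp G → S.card ≤ k →
    M.RigidOn (eSupp G \ ↑S) (deleteVerts G ↑S)

end GraphMatroidFamily

/-!
Every vertex of an `M`-circuit has degree at least `d + 1`, so a graph in which every dependent
subgraph has a vertex of degree at most `d` is `M`-independent. In particular stars are independent
(as `d ≥ 1`), and any `d` edges at `v` can be added to an independent set of edges avoiding `v`.

Suppose `v` has degree `t ≤ k + d - 2` and split `G` into the star `E₁` at `v` and the rest `E₂`.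
Then `r(E₁) = t` and `r(E₂) + min t d ≤ r(G)`, which makes `(E₁, E₂)` a vertical `k'`-separation
for some `k' < k` unless `E₁` spans `G`. It cannot: for `d = 1` because `r(G) ≥ k > t`; for `d ≥ 2`
because `M(G)`, being vertically `2`-connected, is not free, so some edge `f` avoids `v`, and
`E₁ + f` has a vertex of degree at most `2`.

That `d ≥ 1` comes from unboundedness: relabelling a circuit with a leaf `v` shows that every edge
from a new vertex `n` to `K_n` is spanned by `K_n` once `n` is large, so `r(K_n)` stabilises.
-/

open Set

lemma IsGraph.mono {E F : Set (Sym2 ℕ)} (hE : IsGraph E) (hF : F ⊆ E) : IsGraph F :=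
  ⟨hE.1.subset hF, fun e he => hE.2 e (hF he)⟩

lemma eSupp_finite {E : Set (Sym2 ℕ)} (hE : E.Finite) : (eSupp E).Finite := by
  classical
  refine (hE.biUnion fun e _ => e.toFinset.finite_toSet).subset ?_
  rintro v ⟨e, he, hv⟩
  exact mem_biUnion he (Sym2.mem_toFinset.2 hv)

lemma eSupp_nonempty {E : Set (Sym2 ℕ)} (hE : E.Nonempty) : (eSupp E).Nonempty := by
  obtain ⟨e, he⟩ := hE
  exact ⟨e.out.1, e, he, Sym2.out_fst_mem e⟩

lemma one_le_deg {E : Set (Sym2 ℕ)} {v : ℕ} (hE : E.Finite) (hv : v ∈ eSupp E) : 1 ≤ deg E v :=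
  (ncard_pos (hE.subset (sep_subset _ _))).2 hv

lemma exists_deg_eq_minDeg {E : Set (Sym2 ℕ)} (hE : (eSupp E).Nonempty) :
    ∃ v ∈ eSupp E, deg E v = minDeg E := by
  obtain ⟨v, hv⟩ := hE
  exact Nat.sInf_mem (s := {k | ∃ v ∈ eSupp E, deg E v = k}) ⟨_, v, hv, rfl⟩

lemma deg_add_one_le_ncard_eSupp {E : Set (Sym2 ℕ)} {v : ℕ} (hE : IsGraph E) (hv : v ∈ eSupp E) :
    deg E v + 1 ≤ (eSupp E).ncard := by
  have hstar : {e ∈ E | v ∈ e} = (fun y => s(v, y)) '' {y | s(v, y) ∈ E} := by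
    ext e
    constructor
    · rintro ⟨he, hve⟩
      obtain ⟨y, rfl⟩ := Sym2.mem_iff_exists.1 hve
      exact ⟨y, he, rfl⟩
    · rintro ⟨y, hy, rfl⟩
      exact ⟨hy, Sym2.mem_mk_left v y⟩
  have hnbrs : {y | s(v, y) ∈ E} ⊆ eSupp E \ {v} := fun y hy =>
    ⟨⟨_, hy, Sym2.mem_mk_right v y⟩, fun hyv => hE.2 _ hy (Sym2.mk_isDiag_iff.2 hyv.symm)⟩
  have hfin := eSupp_finite hE.1
  calc deg E v + 1 ≤ {y | s(v, y) ∈ E}.ncard + 1 := by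
        rw [deg, hstar]
        exact Nat.add_le_add_right (ncard_image_le (hfin.sdiff.subset hnbrs)) 1
    _ ≤ (eSupp E \ {v}).ncard + 1 := Nat.add_le_add_right (ncard_le_ncard hnbrs hfin.sdiff) 1
    _ = (eSupp E).ncard := ncard_sdiff_singleton_add_one hv hfin

section mrk

variable {M₀ : Matroid (Sym2 ℕ)} {X Y I : Set (Sym2 ℕ)}

lemma mrk_eq_eRk (hX : X.Finite) : (mrk M₀ X : ℕ∞) = M₀.eRk X := by
  obtain ⟨B, hB⟩ := M₀.exists_isBasis' X
  have hBfin := hX.subset hB.subset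
  have hgreatest : IsGreatest {n | ∃ I ⊆ X, M₀.Indep I ∧ I.ncard = n} B.ncard := by
    refine ⟨⟨B, hB.subset, hB.indep, rfl⟩, ?_⟩
    rintro n ⟨I, hIX, hI, rfl⟩
    have h := hI.encard_le_eRk_of_subset hIX
    rw [← hB.encard_eq_eRk, ← (hX.subset hIX).cast_ncard_eq, ← hBfin.cast_ncard_eq] at h
    exact_mod_cast h
  rw [mrk, hgreatest.csSup_eq, hBfin.cast_ncard_eq, hB.encard_eq_eRk]

lemma Matroid.Indep.ncard_le_mrk (hI : M₀.Indep I) (hIX : I ⊆ X) (hX : X.Finite) :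
    I.ncard ≤ mrk M₀ X := by
  have h := hI.encard_le_eRk_of_subset hIX
  rw [← mrk_eq_eRk hX, ← (hX.subset hIX).cast_ncard_eq] at h
  exact_mod_cast h

lemma Matroid.Indep.mrk_eq_ncard (hI : M₀.Indep I) (hIfin : I.Finite) : mrk M₀ I = I.ncard := by
  have h := hI.eRk_eq_encard
  rw [← mrk_eq_eRk hIfin, ← hIfin.cast_ncard_eq] at h
  exact_mod_cast h

lemma exists_indep_ncard_eq_mrk (hX : X.Finite) : ∃ I ⊆ X, M₀.Indep I ∧ I.ncard = mrk M₀ X := by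
  obtain ⟨B, hB⟩ := M₀.exists_isBasis' X
  refine ⟨B, hB.subset, hB.indep, ?_⟩
  have h := hB.encard_eq_eRk
  rw [← mrk_eq_eRk hX, ← (hX.subset hB.subset).cast_ncard_eq] at h
  exact_mod_cast h

lemma mrk_union_le (hX : X.Finite) (hY : Y.Finite) : mrk M₀ (X ∪ Y) ≤ mrk M₀ X + mrk M₀ Y := by
  have h := M₀.eRk_union_le_eRk_add_eRk X Y
  rw [← mrk_eq_eRk hX, ← mrk_eq_eRk hY, ← mrk_eq_eRk (hX.union hY)] at h
  exact_mod_cast h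

lemma mrk_le_of_subset_closure (hX : X.Finite) (hY : Y.Finite) (hYX : Y ⊆ M₀.closure X) :
    mrk M₀ Y ≤ mrk M₀ X := by
  have h := (M₀.eRk_mono hYX).trans_eq (M₀.eRk_closure_eq X)
  rw [← mrk_eq_eRk hX, ← mrk_eq_eRk hY] at h
  exact_mod_cast h

lemma mrk_restrict {G : Set (Sym2 ℕ)} (hXG : X ⊆ G) (hX : X.Finite) :
    mrk (M₀.restrict G) X = mrk M₀ X := by
  have h := M₀.restrict_eRk_eq hXG
  rw [← mrk_eq_eRk hX, ← mrk_eq_eRk hX] at h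
  exact_mod_cast h

end mrk

section VerticallyConnected

variable {M₀ : Matroid (Sym2 ℕ)} {k : ℕ}

lemma VerticallyConnected.min_add_mrk_le (h : VerticallyConnected M₀ k) (hE : M₀.E.Finite)
    {E₁ E₂ : Set (Sym2 ℕ)} (hdisj : Disjoint E₁ E₂) (hunion : E₁ ∪ E₂ = M₀.E) :
    min (k - 1) (min (mrk M₀ E₁) (mrk M₀ E₂)) + mrk M₀ M₀.E ≤ mrk M₀ E₁ + mrk M₀ E₂ := by
  have hsub : mrk M₀ M₀.E ≤ mrk M₀ E₁ + mrk M₀ E₂ := by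
    rw [← hunion]
    exact mrk_union_le (hE.subset (hunion ▸ subset_union_left))
      (hE.subset (hunion ▸ subset_union_right))
  by_contra! hlt
  exact h.2 (mrk M₀ E₁ + mrk M₀ E₂ + 1 - mrk M₀ M₀.E) (by omega) (by omega) E₁ E₂
    ⟨hdisj, hunion, by omega, by omega, by omega⟩

lemma VerticallyConnected.not_indep_ground (h : VerticallyConnected M₀ k) (hk : 2 ≤ k)
    (hE : M₀.E.Finite) : ¬ M₀.Indep M₀.E := by
  intro hind
  have hrk := h.1
  rw [hind.mrk_eq_ncard hE] at hrk
  obtain ⟨e, he⟩ : M₀.E.Nonempty := nonempty_of_ncard_ne_zero (by omega)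
  have hsep := h.min_add_mrk_le hE disjoint_sdiff_right
    (union_sdiff_cancel (singleton_subset_iff.2 he))
  rw [(hind.subset (singleton_subset_iff.2 he)).mrk_eq_ncard (finite_singleton e),
    (hind.subset sdiff_subset).mrk_eq_ncard hE.sdiff, hind.mrk_eq_ncard hE, ncard_singleton] at hsep
  have := ncard_sdiff_singleton_add_one he hE
  omega

end VerticallyConnected

lemma cliqueN_finite (n : ℕ) : (cliqueN n).Finite :=
  (Finset.range n).sym2.finite_toSet.subset fun _ he =>
    Finset.mem_sym2_iff.2 fun v hv => Finset.mem_range.2 (he.2 v hv)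

lemma cliqueN_mono {m n : ℕ} (h : m ≤ n) : cliqueN m ⊆ cliqueN n :=
  fun _ he => ⟨he.1, fun v hv => lt_of_lt_of_le (he.2 v hv) h⟩

lemma cliqueN_succ_subset (n : ℕ) :
    cliqueN (n + 1) ⊆ cliqueN n ∪ {e | ∃ x < n, e = s(x, n)} := by
  rintro e ⟨hdiag, hlt⟩
  by_cases hn : n ∈ e
  · obtain ⟨x, rfl⟩ := Sym2.mem_iff_exists.1 hn
    have hxn : x ≠ n := fun h => hdiag (Sym2.mk_isDiag_iff.2 h.symm)
    have hx : x < n + 1 := hlt x (Sym2.mem_mk_right n x)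
    exact Or.inr ⟨x, by omega, Sym2.eq_swap⟩
  · refine Or.inl ⟨hdiag, fun w hw => ?_⟩
    have hwn : w ≠ n := fun h => hn (h ▸ hw)
    have hw' : w < n + 1 := hlt w hw
    show w < n
    omega

namespace GraphMatroidFamily

variable {M : GraphMatroidFamily} {d : ℕ}

lemma cliqueN_subset_ground (n : ℕ) : cliqueN n ⊆ M.M.E :=
  fun _ he => M.ground_eq ▸ he.1

lemma not_unbounded_of_cliqueN_succ_subset_closure {N : ℕ}
    (h : ∀ n ≥ N, cliqueN (n + 1) ⊆ M.M.closure (cliqueN n)) : ¬ M.Unbounded := by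
  have hN : cliqueN N ⊆ M.M.closure (cliqueN N) := M.M.subset_closure _ (cliqueN_subset_ground N)
  have hspan : ∀ n, cliqueN n ⊆ M.M.closure (cliqueN N) := by
    intro n
    induction n with
    | zero => exact (cliqueN_mono (Nat.zero_le N)).trans hN
    | succ n ih =>
      rcases le_or_gt N n with hn | hn
      · exact (h n hn).trans (M.M.closure_subset_closure_of_subset_closure ih)
      · exact (cliqueN_mono hn).trans hN
  intro hu
  obtain ⟨n, hn⟩ := hu (M.rk (cliqueN N))
  exact hn.not_ge (mrk_le_of_subset_closure (cliqueN_finite N) (cliqueN_finite n) (hspan n))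

lemma exists_isCircuit_subset {X : Set (Sym2 ℕ)} (hX : IsGraph X) (hdep : ¬ M.Indep X) :
    ∃ C ⊆ X, M.IsCircuit C := by
  have hXE : X ⊆ M.M.E := fun e he => M.ground_eq ▸ hX.2 e he
  obtain ⟨C, hCX, hC⟩ := ((Matroid.not_indep_iff hXE).1 hdep).exists_isCircuit_subset
  exact ⟨C, hCX, hX.mono hCX, hC.dep.not_indep, fun e he => hC.sdiff_singleton_indep he⟩

lemma IsCircuit.map_mem_closure {C : Set (Sym2 ℕ)} (hC : M.IsCircuit C) {e : Sym2 ℕ}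
    (he : e ∈ C) (σ : Equiv.Perm ℕ) :
    Sym2.map σ e ∈ M.M.closure (Sym2.map σ '' (C \ {e})) := by
  rw [(M.invariant σ _ (hC.2.2 e he)).mem_closure_iff']
  refine ⟨M.ground_eq ▸ (Sym2.isDiag_map σ.injective).not.2 (hC.1.2 e he), fun hind => ?_⟩
  rw [← image_insert_eq, insert_sdiff_singleton, insert_eq_of_mem he] at hind
  have hCi : M.M.Indep C := by simpa [image_image, Sym2.map_map] using M.invariant σ⁻¹ _ hind
  exact absurd hCi hC.2.1

lemma IsCircuit.mk_mem_closure_cliqueN {C : Set (Sym2 ℕ)} (hC : M.IsCircuit C) {u v N : ℕ}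
    (hleaf : {e ∈ C | v ∈ e} = {s(u, v)}) (hN : ∀ w ∈ eSupp C, w < N) {n x : ℕ} (hn : N ≤ n)
    (hx : x < n) : s(x, n) ∈ M.M.closure (cliqueN n) := by
  have he₀ : s(u, v) ∈ {e ∈ C | v ∈ e} := hleaf ▸ mem_singleton _
  have huv : u ≠ v := fun h => hC.1.2 _ he₀.1 (Sym2.mk_isDiag_iff.2 h)
  have hu : u < N := hN u ⟨_, he₀.1, Sym2.mem_mk_left u v⟩
  have hv : v < N := hN v ⟨_, he₀.1, he₀.2⟩
  set σ := Equiv.swap u x * Equiv.swap v n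
  have hσu : σ u = x := by
    simp only [σ, Equiv.Perm.mul_apply, Equiv.swap_apply_of_ne_of_ne huv (by omega : u ≠ n),
      Equiv.swap_apply_left]
  have hσv : σ v = n := by
    simp only [σ, Equiv.Perm.mul_apply, Equiv.swap_apply_left]
    exact Equiv.swap_apply_of_ne_of_ne (by omega) (by omega)
  have hσ : ∀ w < N, w ≠ v → σ w < n := by
    intro w hw hwv
    simp only [σ, Equiv.Perm.mul_apply, Equiv.swap_apply_of_ne_of_ne hwv (by omega : w ≠ n),
      Equiv.swap_apply_def]
    split_ifs <;> omega
  have hmem := hC.map_mem_closure he₀.1 σ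
  rw [Sym2.map_mk, hσu, hσv] at hmem
  refine M.M.closure_subset_closure ?_ hmem
  rintro _ ⟨f, ⟨hfC, hf⟩, rfl⟩
  refine ⟨(Sym2.isDiag_map σ.injective).not.2 (hC.1.2 f hfC), fun y hy => ?_⟩
  obtain ⟨w, hw, rfl⟩ := Sym2.mem_map.1 hy
  refine hσ w (hN w ⟨f, hfC, hw⟩) fun hwv => hf ?_
  rw [← hleaf]
  exact ⟨hfC, hwv ▸ hw⟩

lemma IsDimensionality.succ_le_deg (hd : M.IsDimensionality d) {C : Set (Sym2 ℕ)}
    (hC : M.IsCircuit C) {v : ℕ} (hv : v ∈ eSupp C) : d + 1 ≤ deg C v := by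
  obtain ⟨w, hw, hwmin⟩ := exists_deg_eq_minDeg ⟨v, hv⟩
  have hpos := one_le_deg hC.1.1 hw
  have hle : d ≤ minDeg C - 1 := hd.2 ⟨C, hC, by omega⟩
  have hmin : minDeg C ≤ deg C v := Nat.sInf_le ⟨v, hv, rfl⟩
  omega

lemma IsDimensionality.one_le_of_unbounded (hd : M.IsDimensionality d) (hu : M.Unbounded) : 1 ≤ d := by
  by_contra! hd0
  obtain ⟨C, hC, hmin⟩ := hd.1
  have hCne : C.Nonempty := nonempty_iff_ne_empty.2 fun h => hC.2.1 (h ▸ M.M.empty_indep)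
  obtain ⟨v, hv, hdeg⟩ := exists_deg_eq_minDeg (eSupp_nonempty hCne)
  obtain ⟨e₀, he₀⟩ := ncard_eq_one.1 (show deg C v = 1 by omega)
  have hve₀ : v ∈ e₀ := (show e₀ ∈ {e ∈ C | v ∈ e} from he₀ ▸ mem_singleton e₀).2
  obtain ⟨u, rfl⟩ := Sym2.mem_iff_exists.1 hve₀
  rw [Sym2.eq_swap] at he₀
  obtain ⟨B, hB⟩ := (eSupp_finite hC.1.1).bddAbove
  refine not_unbounded_of_cliqueN_succ_subset_closure (N := B + 1) (fun n hn => ?_) hu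
  refine (cliqueN_succ_subset n).trans (union_subset (M.M.subset_closure _
    (cliqueN_subset_ground n)) ?_)
  rintro _ ⟨x, hx, rfl⟩
  exact hC.mk_mem_closure_cliqueN he₀ (fun w hw => Nat.lt_succ_of_le (hB hw)) hn hx

lemma IsDimensionality.indep_of_forall_dep_exists_deg_le (hd : M.IsDimensionality d)
    {X : Set (Sym2 ℕ)} (hX : IsGraph X)
    (h : ∀ D ⊆ X, ¬ M.Indep D → ∃ v ∈ eSupp D, deg D v ≤ d) : M.Indep X := by
  by_contra hdep
  obtain ⟨C, hCX, hC⟩ := exists_isCircuit_subset hX hdep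
  obtain ⟨v, hv, hdeg⟩ := h C hCX hC.2.1
  have := hd.succ_le_deg hC hv
  omega


lemma IsDimensionality.indep_of_forall_mem (hd : M.IsDimensionality d) (hd1 : 1 ≤ d)
    {X : Set (Sym2 ℕ)} {v : ℕ} (hX : IsGraph X) (hv : ∀ e ∈ X, v ∈ e) : M.Indep X := by
  refine hd.indep_of_forall_dep_exists_deg_le hX fun D hDX hD => ?_
  obtain ⟨f, hf⟩ : D.Nonempty := nonempty_iff_ne_empty.2 fun h => hD (h ▸ M.M.empty_indep)
  obtain ⟨w, rfl⟩ := Sym2.mem_iff_exists.1 (hv f (hDX hf))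
  have hvw : v ≠ w := fun h => hX.2 _ (hDX hf) (Sym2.mk_isDiag_iff.2 h)
  have hleaf : {e ∈ D | w ∈ e} ⊆ {s(v, w)} := fun e he =>
    (Sym2.mem_and_mem_iff hvw).1 ⟨hv e (hDX he.1), he.2⟩
  refine ⟨w, ⟨_, hf, Sym2.mem_mk_right v w⟩, ?_⟩
  calc deg D w ≤ ({s(v, w)} : Set (Sym2 ℕ)).ncard := ncard_le_ncard hleaf (finite_singleton _)
    _ ≤ d := by rwa [ncard_singleton]

lemma IsDimensionality.indep_insert_of_forall_mem (hd : M.IsDimensionality d) (hd2 : 2 ≤ d)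
    {X : Set (Sym2 ℕ)} {f : Sym2 ℕ} {v : ℕ} (hX : IsGraph (insert f X)) (hv : ∀ e ∈ X, v ∈ e)
    (hf : v ∉ f) : M.Indep (insert f X) := by
  have hXi : M.M.Indep X := hd.indep_of_forall_mem (by omega) (hX.mono (subset_insert f X)) hv
  refine hd.indep_of_forall_dep_exists_deg_le hX fun D hDX hD => ?_
  have hfD : f ∈ D := by
    by_contra hfD
    exact hD (hXi.subset fun e he => (hDX he).resolve_left (ne_of_mem_of_not_mem he hfD))
  have ha : f.out.1 ∈ f := Sym2.out_fst_mem f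
  have hva : v ≠ f.out.1 := fun h => hf (h ▸ ha)
  have hsub : {e ∈ D | f.out.1 ∈ e} ⊆ insert f {s(v, f.out.1)} := by
    rintro e ⟨he, hae⟩
    rcases hDX he with rfl | heX
    · exact mem_insert _ _
    · exact mem_insert_of_mem _ ((Sym2.mem_and_mem_iff hva).1 ⟨hv e heX, hae⟩)
  refine ⟨f.out.1, ⟨f, hfD, ha⟩, ?_⟩
  calc deg D f.out.1 ≤ (insert f {s(v, f.out.1)} : Set (Sym2 ℕ)).ncard :=
        ncard_le_ncard hsub (toFinite _)
    _ ≤ ({s(v, f.out.1)} : Set (Sym2 ℕ)).ncard + 1 := ncard_insert_le _ _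
    _ ≤ d := by rw [ncard_singleton]; omega

lemma IsDimensionality.indep_union_of_forall_mem (hd : M.IsDimensionality d)
    {I F : Set (Sym2 ℕ)} {v : ℕ} (hIF : IsGraph (I ∪ F)) (hI : M.Indep I) (hIv : ∀ e ∈ I, v ∉ e)
    (hFv : ∀ e ∈ F, v ∈ e) (hFd : F.ncard ≤ d) : M.Indep (I ∪ F) := by
  refine hd.indep_of_forall_dep_exists_deg_le hIF fun D hDIF hD => ?_
  obtain ⟨f, hfD, hfF⟩ : (D ∩ F).Nonempty := by
    refine nonempty_iff_ne_empty.2 fun h => hD (Matroid.Indep.subset hI fun e he => ?_)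
    exact (hDIF he).resolve_right fun heF => eq_empty_iff_forall_notMem.1 h e ⟨he, heF⟩
  have hsub : {e ∈ D | v ∈ e} ⊆ F := fun e he =>
    (hDIF he.1).resolve_left fun heI => hIv e heI he.2
  exact ⟨v, ⟨f, hfD, hFv f hfF⟩,
    (ncard_le_ncard hsub (hIF.1.subset subset_union_right)).trans hFd⟩

lemma IsDimensionality.mrk_sdiff_add_min_le (hd : M.IsDimensionality d) {G : Set (Sym2 ℕ)}
    (hG : IsGraph G) (v : ℕ) :
    mrk M.M (G \ {e ∈ G | v ∈ e}) + min (deg G v) d ≤ mrk M.M G := by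
  obtain ⟨I, hIE₂, hI, hIcard⟩ := exists_indep_ncard_eq_mrk (M₀ := M.M) (hG.1.subset
    (sdiff_subset : G \ {e ∈ G | v ∈ e} ⊆ G))
  obtain ⟨F, hFE₁, hFcard⟩ := exists_subset_card_eq (min_le_left (deg G v) d)
  have hIG : I ⊆ G := hIE₂.trans sdiff_subset
  have hFG : F ⊆ G := hFE₁.trans (sep_subset _ _)
  have hIF : M.Indep (I ∪ F) := hd.indep_union_of_forall_mem (hG.mono (union_subset hIG hFG)) hI
    (fun e he hve => (hIE₂ he).2 ⟨hIG he, hve⟩) (fun e he => (hFE₁ he).2)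
    (hFcard ▸ min_le_right _ _)
  have hdisj : Disjoint I F := disjoint_of_subset hIE₂ hFE₁ disjoint_sdiff_left
  calc mrk M.M (G \ {e ∈ G | v ∈ e}) + min (deg G v) d = (I ∪ F).ncard := by
        rw [ncard_union_eq hdisj (hG.1.subset hIG) (hG.1.subset hFG), hIcard, hFcard]
    _ ≤ mrk M.M G := Matroid.Indep.ncard_le_mrk hIF (union_subset hIG hFG) hG.1

lemma IsDimensionality.deg_lt_mrk (hd : M.IsDimensionality d) (hd2 : 2 ≤ d) {G : Set (Sym2 ℕ)}
    (hG : IsGraph G) (hGdep : ¬ M.Indep G) (v : ℕ) : deg G v < mrk M.M G := by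
  obtain ⟨f, hfG, hvf⟩ : ∃ f ∈ G, v ∉ f := by
    by_contra! h
    exact hGdep (hd.indep_of_forall_mem (by omega) hG h)
  have hsub : insert f {e ∈ G | v ∈ e} ⊆ G := insert_subset hfG (sep_subset _ _)
  have hind := hd.indep_insert_of_forall_mem hd2 (hG.mono hsub) (fun e he => he.2) hvf
  calc deg G v < (insert f {e ∈ G | v ∈ e}).ncard := by
        rw [ncard_insert_of_notMem (fun hf => hvf hf.2) (hG.1.subset (sep_subset _ _))]
        exact lt_add_one _
    _ ≤ mrk M.M G := Matroid.Indep.ncard_le_mrk hind hsub hG.1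

theorem IsDimensionality.add_le_deg_add_one (hd : M.IsDimensionality d) (hd1 : 1 ≤ d)
    {G : Set (Sym2 ℕ)} (hG : IsGraph G) {k : ℕ} (hk : 2 ≤ k)
    (hvc : VerticallyConnected (M.M.restrict G) k) {v : ℕ} (hv : v ∈ eSupp G) :
    k + d ≤ deg G v + 1 := by
  have hres : ∀ X ⊆ G, mrk (M.M.restrict G) X = mrk M.M X := fun X hX =>
    mrk_restrict hX (hG.1.subset hX)
  have hE₁ : M.Indep {e ∈ G | v ∈ e} :=
    hd.indep_of_forall_mem hd1 (hG.mono (sep_subset _ _)) fun e he => he.2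
  have hr₁ : mrk M.M {e ∈ G | v ∈ e} = deg G v :=
    Matroid.Indep.mrk_eq_ncard hE₁ (hG.1.subset (sep_subset _ _))
  have hrG : k ≤ mrk M.M G := hres G subset_rfl ▸ hvc.1
  have hsep := hvc.min_add_mrk_le (E₁ := {e ∈ G | v ∈ e}) (E₂ := G \ {e ∈ G | v ∈ e}) hG.1 disjoint_sdiff_right
    (union_sdiff_cancel (sep_subset _ _))
  rw [hres _ (sep_subset _ _), hres _ sdiff_subset, Matroid.restrict_ground_eq, hres G subset_rfl,
    hr₁] at hsep
  have hlow := hd.mrk_sdiff_add_min_le hG v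
  have hdeg := one_le_deg hG.1 hv
  by_contra! hlt
  have hspan : deg G v < mrk M.M G := by
    by_contra! hle
    have hGdep : ¬ M.Indep G := fun hGi =>
      hvc.not_indep_ground hk hG.1 (Matroid.restrict_indep_iff.2 ⟨hGi, subset_rfl⟩)
    exact (hd.deg_lt_mrk (by omega) hG hGdep v).not_ge hle
  omega

end GraphMatroidFamily

theorem vertically_connected_min_degree_general (M : GraphMatroidFamily) (d : ℕ)
    (hu : M.Unbounded) (hd : M.IsDimensionality d)
    (G : Set (Sym2 ℕ)) (hG : IsGraph G) (k : ℕ) (hk : 2 ≤ k)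
    (hvc : VerticallyConnected (M.M.restrict G) k) :
    (∀ v ∈ eSupp G, k + d ≤ deg G v + 1) ∧ k + d ≤ (eSupp G).ncard := by
  have hdeg : ∀ v ∈ eSupp G, k + d ≤ deg G v + 1 := fun v hv =>
    hd.add_le_deg_add_one (hd.one_le_of_unbounded hu) hG hk hvc hv
  refine ⟨hdeg, ?_⟩
  have hGne : G.Nonempty := nonempty_iff_ne_empty.2 fun h =>
    hvc.not_indep_ground hk hG.1 (h ▸ (M.M.restrict G).empty_indep)
  obtain ⟨v, hv⟩ := eSupp_nonempty hGne
  exact (hdeg v hv).trans (deg_add_one_le_ncard_eSupp hG hv)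

/-- Let `G` be a graph (without isolated vertices) and `M` a
nontrivial, unbounded graph matroid family with dimensionality `d`.  Let `k ≥ 2`.
If `M(G)` is vertically `k`-connected, then the minimum degree of `G` is at least
`k + d - 1`; in particular `G` has at least `k + d` vertices. -/
theorem vertically_connected_min_degree (M : GraphMatroidFamily) (d : ℕ)
    (hu : M.Unbounded) (hnt : ¬ M.Trivial) (hd : M.IsDimensionality d)
    (G : Set (Sym2 ℕ)) (hG : IsGraph G) (k : ℕ) (hk : 2 ≤ k)
    (hvc : VerticallyConnected (M.M.restrict G) k) :
    (∀ v ∈ eSupp G, k + d ≤ deg G v + 1) ∧ k + d ≤ (eSupp G).ncard :=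
  vertically_connected_min_degree_general M d hu hd G hG k hk hvc
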